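/- For every octonionic column vector V ∈ 𝕆ⁿ and every λ ∈ 𝕆, one has (λV†)V = λ(V†V) and V†(Vλ) = (V†V)λ, where λV† is the row vector with entries λV̄_i and Vλ is the column vector with entries V_i λ. -/

import Mathlib

noncomputable section

open scoped BigOperators Matrix

/-- The octonions `𝕆`, realized as the Cayley–Dickson double of the quaternions. -/
def Oct : Type := Quaternion ℝ × Quaternion ℝ

namespace Oct

instance : AddCommGroup Oct := inferInstanceAs (AddCommGroup (Quaternion ℝ × Quaternion ℝ))
instance : Module ℝ Oct := inferInstanceAs (Module ℝ (Quaternion ℝ × Quaternion ℝ))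

instance : One Oct := ⟨((1 : Quaternion ℝ), (0 : Quaternion ℝ))⟩

/-- Cayley–Dickson multiplication on `ℍ × ℍ`:
`(a, b) * (c, d) = (a c − d̄ b, d a + b c̄)`. -/
instance : Mul Oct :=
  ⟨fun x y => (x.1 * y.1 - star y.2 * x.2, y.2 * x.1 + x.2 * star y.1)⟩

theorem mul_def (x y : Oct) :
    x * y = (x.1 * y.1 - star y.2 * x.2, y.2 * x.1 + x.2 * star y.1) := rfl

@[simp] theorem fst_zero : (0 : Oct).1 = 0 := rfl
@[simp] theorem snd_zero : (0 : Oct).2 = 0 := rfl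
@[simp] theorem fst_one : (1 : Oct).1 = 1 := rfl
@[simp] theorem snd_one : (1 : Oct).2 = 0 := rfl
@[simp] theorem fst_add (x y : Oct) : (x + y).1 = x.1 + y.1 := rfl
@[simp] theorem snd_add (x y : Oct) : (x + y).2 = x.2 + y.2 := rfl

instance : NonAssocRing Oct :=
  { (inferInstanceAs (AddCommGroup Oct) : AddCommGroup Oct), (inferInstanceAs (One Oct) : One Oct),
    (inferInstanceAs (Mul Oct) : Mul Oct) with
    left_distrib := by
      intro x y z
      show x * (y + z) = x * y + x * z
      refine Prod.ext ?_ ?_ <;>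
        simp only [fst_add, snd_add] <;>
        simp only [mul_def, fst_add, snd_add, star_add] <;> noncomm_ring
    right_distrib := by
      intro x y z
      show (x + y) * z = x * z + y * z
      refine Prod.ext ?_ ?_ <;>
        simp only [fst_add, snd_add] <;>
        simp only [mul_def, fst_add, snd_add, star_add] <;> noncomm_ring
    zero_mul := by
      intro x
      show (0 : Oct) * x = 0
      refine Prod.ext ?_ ?_ <;> simp [mul_def]
    mul_zero := by
      intro x
      show x * (0 : Oct) = 0
      refine Prod.ext ?_ ?_ <;> simp [mul_def]
    one_mul := by
      intro x
      show (1 : Oct) * x = x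
      refine Prod.ext ?_ ?_ <;> simp [mul_def]
    mul_one := by
      intro x
      show x * (1 : Oct) = x
      refine Prod.ext ?_ ?_ <;> simp [mul_def] }

/-- Octonionic conjugation `a ↦ ā`. -/
def conj (x : Oct) : Oct := (star x.1, -x.2)

/-- The canonical embedding of `ℝ` into `𝕆`. -/
def oR (r : ℝ) : Oct := r • (1 : Oct)

/-- Real part `Re(a) = (a + ā)/2`, as an octonion. -/
def re (x : Oct) : Oct := (2 : ℝ)⁻¹ • (x + conj x)

/-- Imaginary part `Im(a) = (a − ā)/2`, as an octonion. -/
def im (x : Oct) : Oct := (2 : ℝ)⁻¹ • (x - conj x)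

/-- The coefficient of `1` in an octonion (real-part coefficient). -/
def reCoeff (x : Oct) : ℝ := x.1.re

/-- Inner product `a·b = (a b̄ + b ā)/2`, a real octonion. -/
def dot (a b : Oct) : Oct := (2 : ℝ)⁻¹ • (a * conj b + b * conj a)

/-- Norm `|a| = √(a ā)`. -/
def onorm (a : Oct) : ℝ := Real.sqrt (reCoeff (a * conj a))

/-- Octonionic associator `[a,b,c] = (ab)c − a(bc)`. -/
def assoc (a b c : Oct) : Oct := a * b * c - a * (b * c)

/-- The general 2×2 octonionic Hermitian matrix `[[p, a], [ā, m]]`. -/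
def herm2 (p m : ℝ) (a : Oct) : Matrix (Fin 2) (Fin 2) Oct := !![oR p, a; conj a, oR m]

/-- `J(r̂) = [[0, −r̂], [r̂, 0]]`. -/
def J (r : Oct) : Matrix (Fin 2) (Fin 2) Oct := !![0, -r; r, 0]

/-- The set `𝔸` of matrices `p I + q J(r̂)` with `p, q ∈ ℝ`, `q ≠ 0`,
and `r̂` a pure imaginary unit octonion (equivalently `r̂ ² = −1`). -/
def memA (A : Matrix (Fin 2) (Fin 2) Oct) : Prop :=
  ∃ (p q : ℝ) (r : Oct), q ≠ 0 ∧ r * r = -1 ∧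
    A = p • (1 : Matrix (Fin 2) (Fin 2) Oct) + q • J r

/-- The set `𝕍` of vectors `(x, y)ᵀ ∈ 𝕆²` with `|x|² = |y|²` and `x·y = 0`. -/
def memV (v : Fin 2 → Oct) : Prop :=
  onorm (v 0) ^ 2 = onorm (v 1) ^ 2 ∧ dot (v 0) (v 1) = 0

/-- The general 3×3 octonionic Hermitian matrix `[[p, a, b̄], [ā, m, c], [b, c̄, n]]`. -/
def herm3 (p m n : ℝ) (a b c : Oct) : Matrix (Fin 3) (Fin 3) Oct :=
  !![oR p, a, conj b; conj a, oR m, c; b, conj c, oR n]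

/-- Vector associator `[U,V,W] = (U V†) W − U (V† W)`. -/
def vAssoc {n : ℕ} (U V W : Fin n → Oct) : Fin n → Oct :=
  fun i => (∑ j, (U i * conj (V j)) * W j) - U i * (∑ j, conj (V j) * W j)

/-- Outer product `U V†`, the matrix with `(i,j)` entry `U_i V̄_j`. -/
def outer {n : ℕ} (U V : Fin n → Oct) : Matrix (Fin n) (Fin n) Oct :=
  Matrix.of fun i j => U i * conj (V j)

/-- `Ã = A − (tr A) I`. -/
def tilde {n : ℕ} (A : Matrix (Fin n) (Fin n) Oct) : Matrix (Fin n) (Fin n) Oct :=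
  A - Matrix.of fun i j => if i = j then Matrix.trace A else 0

end Oct

open Oct

lemma q1 (l1 l2 a b : Quaternion ℝ) :
    (l1 * star a + star b * l2) * a - star b * (-(b * l1) + l2 * a)
      = l1 * (star a * a + star b * b) := by
  have c2 : star b * (b * l1) = l1 * (star b * b) := by
    rw [← mul_assoc, Quaternion.star_mul_self]
    exact (Quaternion.coe_commute _ l1).eq
  simp only [mul_add, mul_neg, add_mul, mul_assoc, c2]
  abel

lemma q2 (l1 l2 a b : Quaternion ℝ) :
    b * (l1 * star a + star b * l2) + (-(b * l1) + l2 * a) * star a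
      = l2 * (star a * a + star b * b) := by
  have c1 : l2 * (a * star a) = l2 * (star a * a) := by
    rw [Quaternion.self_mul_star, Quaternion.star_mul_self]
  have c2 : b * (star b * l2) = l2 * (star b * b) := by
    rw [← mul_assoc, Quaternion.self_mul_star, (Quaternion.coe_commute _ l2).eq,
      ← Quaternion.star_mul_self]
  simp only [mul_add, add_mul, neg_mul, mul_assoc, c1, c2]
  abel

lemma q3 (l1 l2 a b : Quaternion ℝ) :
    star a * (a * l1 - star l2 * b) + (star a * star l2 + l1 * star b) * b
      = (star a * a + star b * b) * l1 := by
  have c2 : star b * (b * l1) = l1 * (star b * b) := by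
    rw [← mul_assoc, Quaternion.star_mul_self]
    exact (Quaternion.coe_commute _ l1).eq
  simp only [mul_sub, add_mul, mul_assoc, c2]
  abel

lemma q4 (l1 l2 a b : Quaternion ℝ) :
    (l2 * a + b * star l1) * star a + -(b * (star l1 * star a - star b * l2))
      = l2 * (star a * a + star b * b) := by
  have c1 : l2 * (a * star a) = l2 * (star a * a) := by
    rw [Quaternion.self_mul_star, Quaternion.star_mul_self]
  have c2 : b * (star b * l2) = l2 * (star b * b) := by
    rw [← mul_assoc, Quaternion.self_mul_star, (Quaternion.coe_commute _ l2).eq,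
      ← Quaternion.star_mul_self]
  simp only [add_mul, mul_sub, mul_add, mul_assoc, c1, c2]
  abel

@[simp] lemma fst_mul' (x y : Oct) : (x * y).1 = x.1 * y.1 - star y.2 * x.2 := rfl
@[simp] lemma snd_mul' (x y : Oct) : (x * y).2 = y.2 * x.1 + x.2 * star y.1 := rfl
@[simp] lemma conj_fst' (x : Oct) : (Oct.conj x).1 = star x.1 := rfl
@[simp] lemma conj_snd' (x : Oct) : (Oct.conj x).2 = -x.2 := rfl

lemma key1 (lam v : Oct) : (lam * Oct.conj v) * v = lam * (Oct.conj v * v) := by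
  refine Prod.ext ?_ ?_ <;>
    simp only [fst_mul', snd_mul', conj_fst', conj_snd', star_add, star_sub, star_mul, star_star, star_neg, star_zero,
      neg_mul, mul_neg, neg_neg, sub_neg_eq_add, mul_zero, zero_mul, sub_zero, add_zero, zero_add,
      add_neg_cancel]
  · exact q1 lam.1 lam.2 v.1 v.2
  · exact q2 lam.1 lam.2 v.1 v.2

lemma key2 (lam v : Oct) : Oct.conj v * (v * lam) = (Oct.conj v * v) * lam := by
  refine Prod.ext ?_ ?_ <;>
    simp only [fst_mul', snd_mul', conj_fst', conj_snd', star_add, star_sub, star_mul, star_star, star_neg, star_zero,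
      neg_mul, mul_neg, neg_neg, sub_neg_eq_add, mul_zero, zero_mul, sub_zero, add_zero, zero_add,
      add_neg_cancel]
  · exact q3 lam.1 lam.2 v.1 v.2
  · exact q4 lam.1 lam.2 v.1 v.2

/-- `(λV†)V = λ(V†V)` and `V†(Vλ) = (V†V)λ`. -/
theorem stmt_13 (n : ℕ) (V : Fin n → Oct) (lam : Oct) :
    (∑ j, (lam * conj (V j)) * V j) = lam * ∑ j, conj (V j) * V j ∧
      (∑ j, conj (V j) * (V j * lam)) = (∑ j, conj (V j) * V j) * lam := by
  constructor
  · refine Eq.trans ?_ (Finset.mul_sum ..).symm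
    exact Finset.sum_congr rfl fun j _ => key1 lam (V j)
  · refine Eq.trans ?_ (Finset.sum_mul ..).symm
    exact Finset.sum_congr rfl fun j _ => key2 lam (V j)
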